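/- Let U ∈ E_{D,p}(r) be a minimal solution. Then the image of its support is contained in the p-minimal support: Im(φ_U) ⊆ Σ_p(D). -/

import Mathlib

open scoped BigOperators
open scoped Classical

/-- `sp p u` is the sum of the base-`p` digits of `u`. -/
def sp (p u : ℕ) : ℕ := (Nat.digits p u).sum

variable {ι : Type} [Fintype ι]

/-- The coordinatewise sum `Σ_{d ∈ D} u_d · d`. -/
def sigmaSum (D : Finset (ι → ℕ)) (U : D → ℕ) (k : ι) : ℕ :=
  ∑ d, U d * (d : ι → ℕ) k

/-- Membership in the set `E_{D,p}(r)`. -/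
def memE (p : ℕ) (D : Finset (ι → ℕ)) (r : ℕ) (U : D → ℕ) : Prop :=
  (∀ d, U d ≤ p ^ r - 1) ∧
  (∀ k, (p ^ r - 1) ∣ sigmaSum D U k ∧ 0 < sigmaSum D U k)

/-- The `p`-weight `s_p(U)` of a tuple `U`. -/
def spU (p : ℕ) (D : Finset (ι → ℕ)) (U : D → ℕ) : ℕ := ∑ d, sp p (U d)

/-- `s_{D,p}(r)`, the minimal `p`-weight of an element of `E_{D,p}(r)`. -/
noncomputable def sDp (p : ℕ) (D : Finset (ι → ℕ)) (r : ℕ) : ℕ :=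
  sInf { s | ∃ U : D → ℕ, memE p D r U ∧ spU p D U = s }

/-- The `p`-density `δ_p(D)` of the set `D`. -/
noncomputable def density (p : ℕ) (D : Finset (ι → ℕ)) : ℝ :=
  (1 / ((p : ℝ) - 1)) * sInf { x : ℝ | ∃ r : ℕ, 1 ≤ r ∧ x = (sDp p D r : ℝ) / (r : ℝ) }

/-- A minimal solution in `E_{D,p}(r)`. -/
def minimalSol (p : ℕ) (D : Finset (ι → ℕ)) (r : ℕ) (U : D → ℕ) : Prop :=
  memE p D r U ∧ (spU p D U : ℝ) = ((p : ℝ) - 1) * (r : ℝ) * density p D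

/-- `φ_r(U) = (1/(p^r − 1)) Σ_{d ∈ D} u_d · d`. -/
def phiMap (p : ℕ) (D : Finset (ι → ℕ)) (r : ℕ) (U : D → ℕ) (k : ι) : ℕ :=
  sigmaSum D U k / (p ^ r - 1)

/-- The shift `δ_r` on `{0, …, p^r − 1}`. -/
def shiftFun (p r u : ℕ) : ℕ := if u = p ^ r - 1 then u else (p * u) % (p ^ r - 1)

/-- The componentwise action of the shift `δ_r` on tuples. -/
def shiftE (p : ℕ) (D : Finset (ι → ℕ)) (r : ℕ) (U : D → ℕ) : D → ℕ :=
  fun d => shiftFun p r (U d)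

/-- The support `φ_U : ℤ/rℤ → ℕ^n` of a solution `U ∈ E_{D,p}(r)`. -/
def suppMap (p : ℕ) (D : Finset (ι → ℕ)) (r : ℕ) (U : D → ℕ) (k : ZMod r) : ι → ℕ :=
  phiMap p D r ((shiftE p D r)^[k.val] U)

/-- Membership in `MI_{D,p}(r)`: minimal irreducible solutions. -/
def memMI (p : ℕ) (D : Finset (ι → ℕ)) (r : ℕ) (U : D → ℕ) : Prop :=
  minimalSol p D r U ∧ Function.Injective (suppMap p D r U)

/-- The `p`-minimal support `Σ_p(D)`. -/
def minSupport (p : ℕ) (D : Finset (ι → ℕ)) : Set (ι → ℕ) :=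
  { e | ∃ r : ℕ, 1 ≤ r ∧ ∃ U : D → ℕ, memMI p D r U ∧ e ∈ Set.range (suppMap p D r U) }

/-- `ψ(U)`: the tuple of last base-`p` digits of `U`. -/
def psiMap (p : ℕ) (D : Finset (ι → ℕ)) (U : D → ℕ) : D → ℕ := fun d => U d % p

/-- The set `V(e, e')` of digit tuples of minimal irreducible solutions with
`φ_U(−1) = e` and `φ_U(0) = e'`. -/
def Vset (p : ℕ) (D : Finset (ι → ℕ)) (e e' : ι → ℕ) : Set (D → ℕ) :=
  { v | ∃ r : ℕ, 1 ≤ r ∧ ∃ U : D → ℕ, memMI p D r U ∧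
      suppMap p D r U (-1) = e ∧ suppMap p D r U 0 = e' ∧ psiMap p D U = v }

/-- The weight `w(V) = Σ_{d ∈ D} v_d`. -/
def weightV (D : Finset (ι → ℕ)) (v : D → ℕ) : ℕ := ∑ d, v d

/-! The shift `δ_r` rotates the `r` base-`p` digits of each entry of a solution, so it preserves
the `p`-weight and maps `E_{D,p}(r)` to itself. If the support of a minimal solution `U` is not
injective, rotate `U` to a `V` with `φ_V(m) = φ_V(0)` for some `0 < m < r`. Cutting every entry of
`V` after its `r - m` lowest digits then yields solutions `V mod p^(r-m) ∈ E_{D,p}(r - m)` and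
`V div p^(r-m) ∈ E_{D,p}(m)`, both with `φ` equal to `φ_V(0)`; their weights add up to that of
`V`, and each is at least `(p - 1) · length · δ_p(D)`, so both are minimal. Their supports together
cover that of `V`, and induction on `r` finishes the proof. -/

section Digits

variable {p : ℕ}

theorem sp_eq_mod_add_sp_div (hp : 1 < p) (u : ℕ) : sp p u = u % p + sp p (u / p) := by
  rcases Nat.eq_zero_or_pos u with rfl | hu
  · simp [sp]
  · rw [sp, sp, Nat.digits_def' hp hu, List.sum_cons]

theorem sp_eq_sp_mod_pow_add_sp_div_pow (hp : 1 < p) (t u : ℕ) :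
    sp p u = sp p (u % p ^ t) + sp p (u / p ^ t) := by
  induction t generalizing u with
  | zero => simp [sp, Nat.mod_one]
  | succ t ih =>
    rw [sp_eq_mod_add_sp_div hp u, ih (u / p), sp_eq_mod_add_sp_div hp (u % p ^ (t + 1)),
      Nat.mod_mod_of_dvd u (dvd_pow_self p t.succ_ne_zero), pow_succ',
      Nat.mod_mul_right_div_self, Nat.div_div_eq_div_mul, add_assoc]

theorem shiftFun_succ_add_mul {s a q : ℕ} (ha : a < p ^ s) (hq : q < p) :
    shiftFun p (s + 1) (a + p ^ s * q) = p * a + q := by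
  obtain ⟨x, hx⟩ := Nat.exists_eq_add_of_lt ha
  obtain ⟨y, hy⟩ := Nat.exists_eq_add_of_lt hq
  -- `p * a + q` and `a + p ^ s * q` fall short of `p ^ (s + 1) - 1` by `p * x + y` and
  -- `x + p ^ s * y`, so one of them is maximal iff the other one is.
  have hpa : p ^ (s + 1) = p * a + q + (p * x + y) + 1 := by
    rw [pow_succ']; linear_combination p * hx + hy
  have hu : p ^ (s + 1) = a + p ^ s * q + (x + p ^ s * y) + 1 := by
    rw [pow_succ']; linear_combination p ^ s * hy + hx
  have hdefect : p * x + y = 0 ↔ x + p ^ s * y = 0 := by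
    simp [show p ≠ 0 by omega]
  have hmul : p * (a + p ^ s * q) = p * a + q + (p ^ (s + 1) - 1) * q := by
    have : q ≤ p * p ^ s * q := Nat.le_mul_of_pos_left q (Nat.mul_pos (by omega) (by omega))
    rw [pow_succ', Nat.sub_one_mul, mul_add, ← mul_assoc]
    omega
  unfold shiftFun
  split_ifs with h
  · omega
  · rw [hmul, Nat.add_mul_mod_self_left, Nat.mod_eq_of_lt (by omega)]

theorem shiftFun_iterate_add_mul {i j a b : ℕ} (ha : a < p ^ i) (hb : b < p ^ j) :
    (shiftFun p (i + j))^[j] (a + p ^ i * b) = p ^ j * a + b := by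
  induction j generalizing i a b with
  | zero => simp_all
  | succ j ih =>
    have hp : 0 < p := Nat.pos_of_ne_zero (by rintro rfl; simp at hb)
    have hlow : a + p ^ i * (b % p) < p ^ (i + 1) := by
      rw [pow_succ]; exact Nat.add_mul_lt_mul_of_lt_of_lt ha (Nat.mod_lt b hp)
    have hhigh : b / p < p ^ j := Nat.div_lt_of_lt_mul (by rwa [← pow_succ'])
    have hsplit : a + p ^ i * b = a + p ^ i * (b % p) + p ^ (i + 1) * (b / p) := by
      conv_lhs => rw [← Nat.mod_add_div b p]
      ring
    have hrot : p ^ j * (a + p ^ i * (b % p)) + b / p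
        = (p ^ j * a + b / p) + p ^ (i + j) * (b % p) := by
      ring
    rw [Function.iterate_succ_apply', hsplit, ← Nat.add_assoc i, Nat.add_right_comm i,
      ih hlow hhigh, hrot, Nat.add_right_comm i 1 j, shiftFun_succ_add_mul
        (by rw [pow_add]; exact Nat.mul_add_lt_mul_of_lt_of_lt ha hhigh) (Nat.mod_lt b hp)]
    conv_rhs => rw [← Nat.div_add_mod b p]
    ring

theorem shiftFun_iterate {r j u : ℕ} (hj : j ≤ r) (hu : u < p ^ r) :
    (shiftFun p r)^[j] u = p ^ j * (u % p ^ (r - j)) + u / p ^ (r - j) := by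
  obtain ⟨i, rfl⟩ : ∃ i, r = i + j := ⟨r - j, by omega⟩
  have hpi : 0 < p ^ i := Nat.pos_of_ne_zero (by intro h; simp [pow_add, h] at hu)
  rw [Nat.add_sub_cancel, ← shiftFun_iterate_add_mul (Nat.mod_lt u hpi)
    (Nat.div_lt_of_lt_mul (by rwa [← pow_add])), Nat.mod_add_div]

theorem shiftFun_iterate_lt {r j u : ℕ} (hj : j ≤ r) (hu : u < p ^ r) :
    (shiftFun p r)^[j] u < p ^ r := by
  obtain ⟨i, rfl⟩ : ∃ i, r = i + j := ⟨r - j, by omega⟩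
  have hpi : 0 < p ^ i := Nat.pos_of_ne_zero (by intro h; simp [pow_add, h] at hu)
  rw [shiftFun_iterate hj hu, Nat.add_sub_cancel, pow_add]
  exact Nat.mul_add_lt_mul_of_lt_of_lt (Nat.mod_lt u hpi)
    (Nat.div_lt_of_lt_mul (by rwa [← pow_add]))

theorem sp_shiftFun_iterate (hp : 1 < p) {r j u : ℕ} (hj : j ≤ r) (hu : u < p ^ r) :
    sp p ((shiftFun p r)^[j] u) = sp p u := by
  have hhigh : u / p ^ (r - j) < p ^ j :=
    Nat.div_lt_of_lt_mul (by rwa [← pow_add, Nat.sub_add_cancel hj])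
  rw [shiftFun_iterate hj hu, sp_eq_sp_mod_pow_add_sp_div_pow hp j,
    sp_eq_sp_mod_pow_add_sp_div_pow hp (r - j) u, Nat.mul_add_mod_self_left,
    Nat.mod_eq_of_lt hhigh, Nat.mul_add_div (by positivity), Nat.div_eq_of_lt hhigh, add_zero,
    add_comm]

theorem shiftFun_iterate_self {r u : ℕ} (hu : u < p ^ r) : (shiftFun p r)^[r] u = u := by
  simp [shiftFun_iterate le_rfl hu, Nat.mod_one]

end Digits

section Sums

variable {ι : Type} {p : ℕ} {D : Finset (ι → ℕ)} {r j : ℕ} {V : D → ℕ}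

theorem sigmaSum_add (f g : D → ℕ) (k : ι) :
    sigmaSum D (fun d => f d + g d) k = sigmaSum D f k + sigmaSum D g k := by
  simp only [sigmaSum, add_mul, Finset.sum_add_distrib]

theorem sigmaSum_mul_left (t : ℕ) (f : D → ℕ) (k : ι) :
    sigmaSum D (fun d => t * f d) k = t * sigmaSum D f k := by
  simp only [sigmaSum, Finset.mul_sum, mul_assoc]

theorem sigmaSum_eq_mod_add_div (W : D → ℕ) (t : ℕ) (k : ι) :
    sigmaSum D W k = sigmaSum D (fun d => W d % t) k + t * sigmaSum D (fun d => W d / t) k := by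
  rw [← sigmaSum_mul_left, ← sigmaSum_add]
  simp only [Nat.mod_add_div]

theorem shiftE_iterate_apply (d : D) :
    ((shiftE p D r)^[j] V) d = (shiftFun p r)^[j] (V d) :=
  Function.Semiconj.iterate_right (f := fun W : D → ℕ => W d) (fun _ => rfl) j V

theorem sigmaSum_shiftE_iterate (hV : ∀ d, V d < p ^ r) (hj : j ≤ r) (k : ι) :
    sigmaSum D ((shiftE p D r)^[j] V) k
      = p ^ j * sigmaSum D (fun d => V d % p ^ (r - j)) k
        + sigmaSum D (fun d => V d / p ^ (r - j)) k := by
  have hrot : (shiftE p D r)^[j] V = fun d => p ^ j * (V d % p ^ (r - j)) + V d / p ^ (r - j) :=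
    funext fun d => (shiftE_iterate_apply d).trans (shiftFun_iterate hj (hV d))
  rw [hrot, sigmaSum_add, sigmaSum_mul_left]

theorem sigmaSum_shiftE_iterate_add (hp : 0 < p) (hV : ∀ d, V d < p ^ r) (hj : j ≤ r) (k : ι) :
    sigmaSum D ((shiftE p D r)^[j] V) k + (p ^ r - 1) * sigmaSum D (fun d => V d / p ^ (r - j)) k
      = p ^ j * sigmaSum D V k := by
  obtain ⟨i, rfl⟩ : ∃ i, r = j + i := ⟨r - j, by omega⟩
  have hpos : 1 ≤ p ^ (j + i) := Nat.one_le_pow _ _ hp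
  rw [sigmaSum_shiftE_iterate hV hj, sigmaSum_eq_mod_add_div V (p ^ i), Nat.add_sub_cancel_left]
  zify [hpos]
  ring

end Sums

section Solutions

variable {ι : Type} {p : ℕ} {D : Finset (ι → ℕ)} {r : ℕ} {V : D → ℕ}

theorem memE.lt_pow (hp : 0 < p) (hV : memE p D r V) (d : D) : V d < p ^ r :=
  Nat.lt_of_le_sub_one (pow_pos hp r) (hV.1 d)

theorem memE.mul_phiMap (hV : memE p D r V) (k : ι) :
    (p ^ r - 1) * phiMap p D r V k = sigmaSum D V k :=
  Nat.mul_div_cancel' (hV.2 k).1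

theorem memE.phiMap_pos (hV : memE p D r V) (k : ι) : 0 < phiMap p D r V k :=
  Nat.pos_of_ne_zero fun h => (hV.2 k).2.ne' (by rw [← hV.mul_phiMap k, h, mul_zero])

theorem memE.shiftE_iterate (hp : 1 < p) (hV : memE p D r V) {j : ℕ} (hj : j ≤ r) :
    memE p D r ((shiftE p D r)^[j] V) := by
  have hlt := hV.lt_pow (by omega)
  refine ⟨fun d => ?_, fun k => ⟨?_, ?_⟩⟩
  · rw [shiftE_iterate_apply]
    exact Nat.le_sub_one_of_lt (shiftFun_iterate_lt hj (hlt d))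
  · have h := sigmaSum_shiftE_iterate_add (by omega) hlt hj k
    exact (Nat.dvd_add_left (dvd_mul_right _ _)).mp (h ▸ dvd_mul_of_dvd_right (hV.2 k).1 _)
  · have hpos := (hV.2 k).2
    rw [sigmaSum_eq_mod_add_div V (p ^ (r - j))] at hpos
    rw [sigmaSum_shiftE_iterate hlt hj]
    rcases Nat.eq_zero_or_pos (sigmaSum D (fun d => V d / p ^ (r - j)) k) with hY | hY
    · rw [hY, mul_zero, add_zero] at hpos
      rw [hY, add_zero]
      exact Nat.mul_pos (pow_pos (by omega) j) hpos
    · omega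

theorem memE.phiMap_shiftE_iterate_add (hp : 1 < p) (hr : 0 < r) (hV : memE p D r V) {j : ℕ}
    (hj : j ≤ r) (k : ι) :
    phiMap p D r ((shiftE p D r)^[j] V) k + sigmaSum D (fun d => V d / p ^ (r - j)) k
      = p ^ j * phiMap p D r V k := by
  apply Nat.eq_of_mul_eq_mul_left (Nat.sub_pos_of_lt (Nat.one_lt_pow hr.ne' hp))
  rw [mul_add, (hV.shiftE_iterate hp hj).mul_phiMap, mul_left_comm, hV.mul_phiMap]
  exact sigmaSum_shiftE_iterate_add (by omega) (hV.lt_pow (by omega)) hj k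

theorem memE.shiftE_iterate_self (hp : 0 < p) (hV : memE p D r V) : (shiftE p D r)^[r] V = V :=
  funext fun d => (shiftE_iterate_apply d).trans (shiftFun_iterate_self (hV.lt_pow hp d))

theorem memE.suppMap_natCast (hp : 0 < p) (hV : memE p D r V) (j : ℕ) :
    suppMap p D r V j = phiMap p D r ((shiftE p D r)^[j] V) := by
  rw [suppMap, ZMod.val_natCast]
  conv_rhs => rw [← Nat.mod_add_div j r, Function.iterate_add_apply, Function.iterate_mul,
    Function.iterate_fixed (hV.shiftE_iterate_self hp)]

theorem memE.range_suppMap_subset_shiftE_iterate (hp : 1 < p) (hV : memE p D r V) {a : ℕ}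
    (ha : a ≤ r) :
    Set.range (suppMap p D r V) ⊆ Set.range (suppMap p D r ((shiftE p D r)^[a] V)) := by
  rintro _ ⟨k, rfl⟩
  refine ⟨((k.val + (r - a) : ℕ) : ZMod r), ?_⟩
  rw [(hV.shiftE_iterate hp ha).suppMap_natCast (by omega), ← Function.iterate_add_apply,
    show k.val + (r - a) + a = k.val + r by omega, Function.iterate_add_apply,
    hV.shiftE_iterate_self (by omega)]
  rfl

theorem memE.le_spU (hp : 1 < p) (hr : 0 < r) (hV : memE p D r V) :
    ((p : ℝ) - 1) * r * density p D ≤ spU p D V := by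
  set S := { x : ℝ | ∃ r : ℕ, 1 ≤ r ∧ x = (sDp p D r : ℝ) / (r : ℝ) }
  have hp' : (p : ℝ) - 1 ≠ 0 := by
    have : (1 : ℝ) < p := by exact_mod_cast hp
    linarith
  have hr' : (r : ℝ) ≠ 0 := by positivity
  have hinf : sInf S ≤ sDp p D r / r :=
    csInf_le ⟨0, by rintro _ ⟨t, -, rfl⟩; positivity⟩ ⟨r, hr, rfl⟩
  have hsDp : sDp p D r ≤ spU p D V := Nat.sInf_le ⟨V, hV, rfl⟩
  calc ((p : ℝ) - 1) * r * density p D = r * sInf S := by rw [density]; field_simp; rfl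
    _ ≤ r * (sDp p D r / r) := by gcongr
    _ = sDp p D r := by field_simp
    _ ≤ spU p D V := by exact_mod_cast hsDp

theorem minimalSol.shiftE_iterate (hp : 1 < p) (hV : minimalSol p D r V) {j : ℕ} (hj : j ≤ r) :
    minimalSol p D r ((shiftE p D r)^[j] V) := by
  refine ⟨hV.1.shiftE_iterate hp hj, ?_⟩
  rw [← hV.2, spU, spU]
  congr 1
  refine Finset.sum_congr rfl fun d _ => ?_
  rw [shiftE_iterate_apply, sp_shiftFun_iterate hp hj (hV.1.lt_pow (by omega) d)]

end Solutions

section Split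

variable {ι : Type} {p : ℕ} {D : Finset (ι → ℕ)} {r m : ℕ} {V : D → ℕ}

theorem memE_and_phiMap_eq_of_sigmaSum_eq (hp : 1 < p) {s : ℕ} (hs : 0 < s) {W : D → ℕ}
    {e : ι → ℕ} (hW : ∀ d, W d < p ^ s) (he : ∀ k, 0 < e k)
    (hσ : ∀ k, sigmaSum D W k = (p ^ s - 1) * e k) : memE p D s W ∧ phiMap p D s W = e := by
  have hN : 0 < p ^ s - 1 := Nat.sub_pos_of_lt (Nat.one_lt_pow hs.ne' hp)
  refine ⟨⟨fun d => Nat.le_sub_one_of_lt (hW d), fun k => ⟨?_, ?_⟩⟩, funext fun k => ?_⟩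
  · exact hσ k ▸ dvd_mul_right _ _
  · exact hσ k ▸ Nat.mul_pos hN (he k)
  · rw [phiMap, hσ k, Nat.mul_div_cancel_left _ hN]

theorem memE.sigmaSum_div_add_phiMap (hp : 1 < p) (hV : memE p D r V) (hm : 0 < m) (hmr : m < r)
    (heq : phiMap p D r ((shiftE p D r)^[m] V) = phiMap p D r V) (k : ι) :
    sigmaSum D (fun d => V d / p ^ (r - m)) k + phiMap p D r V k = p ^ m * phiMap p D r V k := by
  rw [← hV.phiMap_shiftE_iterate_add hp (by omega) hmr.le k, heq, add_comm]

theorem memE.div_of_phiMap_shiftE_iterate_eq (hp : 1 < p) (hV : memE p D r V) (hm : 0 < m)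
    (hmr : m < r) (heq : phiMap p D r ((shiftE p D r)^[m] V) = phiMap p D r V) :
    memE p D m (fun d => V d / p ^ (r - m)) ∧
      phiMap p D m (fun d => V d / p ^ (r - m)) = phiMap p D r V := by
  refine memE_and_phiMap_eq_of_sigmaSum_eq hp hm (fun d => ?_) hV.phiMap_pos fun k => ?_
  · refine Nat.div_lt_of_lt_mul ?_
    rw [← pow_add, Nat.sub_add_cancel hmr.le]
    exact hV.lt_pow (by omega) d
  · have h := hV.sigmaSum_div_add_phiMap hp hm hmr heq k
    rw [Nat.sub_one_mul]
    omega

theorem memE.mod_of_phiMap_shiftE_iterate_eq (hp : 1 < p) (hV : memE p D r V) (hm : 0 < m)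
    (hmr : m < r) (heq : phiMap p D r ((shiftE p D r)^[m] V) = phiMap p D r V) :
    memE p D (r - m) (fun d => V d % p ^ (r - m)) ∧
      phiMap p D (r - m) (fun d => V d % p ^ (r - m)) = phiMap p D r V := by
  refine memE_and_phiMap_eq_of_sigmaSum_eq hp (by omega) (fun d => Nat.mod_lt _ (by positivity))
    hV.phiMap_pos fun k => ?_
  have hY := hV.sigmaSum_div_add_phiMap hp hm hmr heq k
  have hσ := hV.mul_phiMap k
  rw [sigmaSum_eq_mod_add_div V (p ^ (r - m))] at hσ
  obtain ⟨i, rfl⟩ : ∃ i, r = i + m := ⟨r - m, by omega⟩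
  rw [Nat.add_sub_cancel] at hY hσ ⊢
  have h1 : 1 ≤ p ^ i := Nat.one_le_pow _ _ (by omega)
  have h2 : 1 ≤ p ^ (i + m) := Nat.one_le_pow _ _ (by omega)
  zify [h1, h2] at hY hσ ⊢
  rw [pow_add] at hσ
  linear_combination -(p : ℤ) ^ i * hY - hσ

theorem memE.phiMap_shiftE_iterate_div (hp : 1 < p) (hV : memE p D r V) (hm : 0 < m) (hmr : m < r)
    (heq : phiMap p D r ((shiftE p D r)^[m] V) = phiMap p D r V) {j : ℕ} (hj : j ≤ m) :
    phiMap p D m ((shiftE p D m)^[j] (fun d => V d / p ^ (r - m)))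
      = phiMap p D r ((shiftE p D r)^[j] V) := by
  obtain ⟨hH, hφH⟩ := hV.div_of_phiMap_shiftE_iterate_eq hp hm hmr heq
  funext k
  have hHj := hH.phiMap_shiftE_iterate_add hp hm hj k
  have hVj := hV.phiMap_shiftE_iterate_add hp (by omega) (hj.trans hmr.le) k
  have hdiv : (fun d => V d / p ^ (r - m) / p ^ (m - j)) = fun d => V d / p ^ (r - j) := by
    funext d
    rw [Nat.div_div_eq_div_mul, ← pow_add, Nat.sub_add_sub_cancel hmr.le hj]
  rw [hdiv, hφH] at hHj
  omega

theorem memE.phiMap_shiftE_iterate_mod (hp : 1 < p) (hV : memE p D r V) (hm : 0 < m) (hmr : m < r)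
    (heq : phiMap p D r ((shiftE p D r)^[m] V) = phiMap p D r V) {j : ℕ} (hj : j ≤ r - m) :
    phiMap p D (r - m) ((shiftE p D (r - m))^[j] (fun d => V d % p ^ (r - m)))
      = phiMap p D r ((shiftE p D r)^[m + j] V) := by
  obtain ⟨hL, hφL⟩ := hV.mod_of_phiMap_shiftE_iterate_eq hp hm hmr heq
  funext k
  have hLj := hL.phiMap_shiftE_iterate_add hp (by omega) hj k
  have hVj := hV.phiMap_shiftE_iterate_add hp (by omega) (show m + j ≤ r by omega) k
  have hY := congrArg (p ^ j * ·) (hV.sigmaSum_div_add_phiMap hp hm hmr heq k)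
  simp only [mul_add, ← mul_assoc, ← pow_add, add_comm j m] at hY
  -- the digits of `V d / p ^ (r - m - j)` are those of `V d / p ^ (r - m)` followed by the top
  -- `j` digits of `V d % p ^ (r - m)`
  have hpow : p ^ (r - (m + j)) * p ^ j = p ^ (r - m) := by
    rw [← pow_add]; congr 1; omega
  have hsplit := sigmaSum_eq_mod_add_div (fun d => V d / p ^ (r - (m + j))) (p ^ j) k
  simp only [← Nat.mod_mul_right_div_self, Nat.div_div_eq_div_mul, hpow] at hsplit
  rw [hφL, show r - m - j = r - (m + j) by omega] at hLj
  omega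

theorem memE.range_suppMap_subset_union (hp : 1 < p) (hV : memE p D r V) (hm : 0 < m)
    (hmr : m < r) (heq : phiMap p D r ((shiftE p D r)^[m] V) = phiMap p D r V) :
    Set.range (suppMap p D r V) ⊆ Set.range (suppMap p D (r - m) (fun d => V d % p ^ (r - m))) ∪
      Set.range (suppMap p D m (fun d => V d / p ^ (r - m))) := by
  have : NeZero r := ⟨by omega⟩
  rintro _ ⟨k, rfl⟩
  rcases lt_or_ge k.val m with hk | hk
  · refine Or.inr ⟨k.val, ?_⟩
    rw [(hV.div_of_phiMap_shiftE_iterate_eq hp hm hmr heq).1.suppMap_natCast (by omega),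
      hV.phiMap_shiftE_iterate_div hp hm hmr heq hk.le]
    rfl
  · refine Or.inl ⟨(k.val - m : ℕ), ?_⟩
    rw [(hV.mod_of_phiMap_shiftE_iterate_eq hp hm hmr heq).1.suppMap_natCast (by omega),
      hV.phiMap_shiftE_iterate_mod hp hm hmr heq (by have := k.val_lt; omega),
      Nat.add_sub_cancel' hk]
    rfl

theorem minimalSol.mod_and_div (hp : 1 < p) (hV : minimalSol p D r V) (hm : 0 < m) (hmr : m < r)
    (heq : phiMap p D r ((shiftE p D r)^[m] V) = phiMap p D r V) :
    minimalSol p D (r - m) (fun d => V d % p ^ (r - m)) ∧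
      minimalSol p D m (fun d => V d / p ^ (r - m)) := by
  obtain ⟨hL, -⟩ := hV.1.mod_of_phiMap_shiftE_iterate_eq hp hm hmr heq
  obtain ⟨hH, -⟩ := hV.1.div_of_phiMap_shiftE_iterate_eq hp hm hmr heq
  have hspU : spU p D (fun d => V d % p ^ (r - m)) + spU p D (fun d => V d / p ^ (r - m))
      = spU p D V := by
    simp only [spU, ← Finset.sum_add_distrib, ← sp_eq_sp_mod_pow_add_sp_div_pow hp]
  have hsum : (spU p D (fun d => V d % p ^ (r - m)) : ℝ) + spU p D (fun d => V d / p ^ (r - m))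
      = ((p : ℝ) - 1) * r * density p D := by
    rw [← hV.2]; exact_mod_cast hspU
  have hL' := hL.le_spU hp (by omega)
  have hH' := hH.le_spU hp hm
  have hsplit : ((p : ℝ) - 1) * ((r - m : ℕ) : ℝ) * density p D
      + ((p : ℝ) - 1) * m * density p D = ((p : ℝ) - 1) * r * density p D := by
    rw [Nat.cast_sub hmr.le]; ring
  exact ⟨⟨hL, by linarith⟩, ⟨hH, by linarith⟩⟩

theorem exists_phiMap_shiftE_iterate_eq_of_not_injective (hr : 0 < r)
    (h : ¬ Function.Injective (suppMap p D r V)) :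
    ∃ a m, 0 < m ∧ a + m < r ∧ phiMap p D r ((shiftE p D r)^[m] ((shiftE p D r)^[a] V))
      = phiMap p D r ((shiftE p D r)^[a] V) := by
  have : NeZero r := ⟨hr.ne'⟩
  obtain ⟨k, l, hkl, hne⟩ := Function.not_injective_iff.mp h
  wlog hlt : k.val < l.val generalizing k l
  · exact this l k hkl.symm hne.symm
      (lt_of_le_of_ne (not_lt.mp hlt) fun h => hne (ZMod.val_injective r h.symm))
  refine ⟨k.val, l.val - k.val, by omega, by have := l.val_lt; omega, ?_⟩
  rw [← Function.iterate_add_apply, Nat.sub_add_cancel hlt.le]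
  exact hkl.symm

end Split

theorem supp_of_minimal_subset_minSupport_general (p : ℕ) (hp : p.Prime) {ι : Type} (D : Finset (ι → ℕ))
    (r : ℕ) (hr : 1 ≤ r) (U : D → ℕ) (hU : minimalSol p D r U) :
    Set.range (suppMap p D r U) ⊆ minSupport p D := by
  induction r using Nat.strong_induction_on generalizing U with
  | _ r ih =>
  by_cases hinj : Function.Injective (suppMap p D r U)
  · rintro _ ⟨k, rfl⟩
    exact ⟨r, hr, U, ⟨hU, hinj⟩, k, rfl⟩
  obtain ⟨a, m, hm, hamr, heq⟩ := exists_phiMap_shiftE_iterate_eq_of_not_injective hr hinj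
  have hV := hU.shiftE_iterate hp.one_lt (j := a) (by omega)
  obtain ⟨hL, hH⟩ := hV.mod_and_div hp.one_lt hm (by omega) heq
  calc Set.range (suppMap p D r U)
      ⊆ Set.range (suppMap p D r ((shiftE p D r)^[a] U)) :=
        hU.1.range_suppMap_subset_shiftE_iterate hp.one_lt (by omega)
    _ ⊆ _ := hV.1.range_suppMap_subset_union hp.one_lt hm (by omega) heq
    _ ⊆ minSupport p D :=
        Set.union_subset (ih _ (by omega) (by omega) _ hL) (ih m (by omega) hm _ hH)

/-- For a minimal solution `U ∈ E_{D,p}(r)`, the image of its support is contained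
in the `p`-minimal support `Σ_p(D)`. -/
theorem supp_of_minimal_subset_minSupport (p : ℕ) (hp : p.Prime)
    {ι : Type} [Fintype ι] [Nonempty ι]
    (D : Finset (ι → ℕ)) (hD : D.Nonempty)
    (hcoord : ∀ k : ι, ∃ d ∈ D, 0 < d k)
    (r : ℕ) (hr : 1 ≤ r) (U : D → ℕ) (hU : minimalSol p D r U) :
    Set.range (suppMap p D r U) ⊆ minSupport p D :=
  supp_of_minimal_subset_minSupport_general p hp D r hr U hU
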